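/- Let H be an n-vertex C5-free 3-graph with δ2^+(H) ≥ n/2 containing a K4 on vi, vj, vk, vl. Define A_i = N(vj,vk) ∩ N(vk,vl) ∩ N(vl,vj) and similarly A_j, A_k, A_l, and B_i = N(vi,vj) ∩ N(vi,vk) ∩ N(vi,vl) and similarly B_j, B_k, B_l. Then these eight sets partition V(H), and vi ∈ A_i (so A_i ≠ ∅). -/
import Mathlib


open Finset

/-- The link (co-neighborhood) of the pair `{u,v}`: all `w` with `{u,v,w}` an edge. -/
def link {n : ℕ} (E : Finset (Finset (Fin n))) (u v : Fin n) : Finset (Fin n) :=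
  Finset.univ.filter (fun w => ({u, v, w} : Finset (Fin n)) ∈ E)

/-- `E` is the edge set of a 3-graph: every edge has exactly 3 vertices. -/
def isEdgeSet {n : ℕ} (E : Finset (Finset (Fin n))) : Prop := ∀ e ∈ E, e.card = 3

/-- `E` contains a copy of `C5⁻ = {abc, bcd, cde, dea}`. -/
def hasC5minus {n : ℕ} (E : Finset (Finset (Fin n))) : Prop :=
  ∃ a b c d e : Fin n,
    a ≠ b ∧ a ≠ c ∧ a ≠ d ∧ a ≠ e ∧ b ≠ c ∧ b ≠ d ∧ b ≠ e ∧ c ≠ d ∧ c ≠ e ∧ d ≠ e ∧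
    ({a, b, c} : Finset (Fin n)) ∈ E ∧ ({b, c, d} : Finset (Fin n)) ∈ E ∧
    ({c, d, e} : Finset (Fin n)) ∈ E ∧ ({d, e, a} : Finset (Fin n)) ∈ E

/-- `E` contains a copy of `C5 = {abc, bcd, cde, dea, eab}`. -/
def hasC5 {n : ℕ} (E : Finset (Finset (Fin n))) : Prop :=
  ∃ a b c d e : Fin n,
    a ≠ b ∧ a ≠ c ∧ a ≠ d ∧ a ≠ e ∧ b ≠ c ∧ b ≠ d ∧ b ≠ e ∧ c ≠ d ∧ c ≠ e ∧ d ≠ e ∧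
    ({a, b, c} : Finset (Fin n)) ∈ E ∧ ({b, c, d} : Finset (Fin n)) ∈ E ∧
    ({c, d, e} : Finset (Fin n)) ∈ E ∧ ({d, e, a} : Finset (Fin n)) ∈ E ∧
    ({e, a, b} : Finset (Fin n)) ∈ E

/-- `a, b, c, d` form a `K4` in `E`: all four triples among them are edges. -/
def isK4 {n : ℕ} (E : Finset (Finset (Fin n))) (a b c d : Fin n) : Prop :=
  a ≠ b ∧ a ≠ c ∧ a ≠ d ∧ b ≠ c ∧ b ≠ d ∧ c ≠ d ∧
  ({a, b, c} : Finset (Fin n)) ∈ E ∧ ({a, b, d} : Finset (Fin n)) ∈ E ∧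
  ({a, c, d} : Finset (Fin n)) ∈ E ∧ ({b, c, d} : Finset (Fin n)) ∈ E

/-- `E` contains a copy of `K4⁻ = {abc, abd, acd}`. -/
def hasK4minus {n : ℕ} (E : Finset (Finset (Fin n))) : Prop :=
  ∃ a b c d : Fin n, a ≠ b ∧ a ≠ c ∧ a ≠ d ∧ b ≠ c ∧ b ≠ d ∧ c ≠ d ∧
    ({a, b, c} : Finset (Fin n)) ∈ E ∧ ({a, b, d} : Finset (Fin n)) ∈ E ∧
    ({a, c, d} : Finset (Fin n)) ∈ E

/-- `A`-set of a `K4`: intersection of the three pairwise links of `{x, y, z}`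
(the set `A_w` for the fourth vertex `w` of the `K4`). -/
def Aset {n : ℕ} (E : Finset (Finset (Fin n))) (x y z : Fin n) : Finset (Fin n) :=
  link E x y ∩ link E y z ∩ link E z x

/-- `B`-set of a `K4`: `B_w = N(w,x) ∩ N(w,y) ∩ N(w,z)`. -/
def Bset {n : ℕ} (E : Finset (Finset (Fin n))) (w x y z : Fin n) : Finset (Fin n) :=
  link E w x ∩ link E w y ∩ link E w z

section helpers
variable {α : Type*} [DecidableEq α]

lemma tri_perm {E : Finset (Finset α)} {a b c : α} (h : ({a,b,c}:Finset α) ∈ E) :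
    ({a,c,b}:Finset α) ∈ E ∧ ({b,a,c}:Finset α) ∈ E ∧ ({b,c,a}:Finset α) ∈ E ∧
    ({c,a,b}:Finset α) ∈ E ∧ ({c,b,a}:Finset α) ∈ E := by
  refine ⟨?_,?_,?_,?_,?_⟩ <;>
    [ rw [show ({a,c,b}:Finset α) = {a,b,c} from by ext x; simp; try tauto];
      rw [show ({b,a,c}:Finset α) = {a,b,c} from by ext x; simp; try tauto];
      rw [show ({b,c,a}:Finset α) = {a,b,c} from by ext x; simp; try tauto];
      rw [show ({c,a,b}:Finset α) = {a,b,c} from by ext x; simp; try tauto];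
      rw [show ({c,b,a}:Finset α) = {a,b,c} from by ext x; simp; try tauto]] <;> exact h

lemma card3_distinct {a b c : α} (h : ({a,b,c}:Finset α).card = 3) :
    a ≠ b ∧ a ≠ c ∧ b ≠ c := by
  refine ⟨fun e => ?_, fun e => ?_, fun e => ?_⟩
  · rw [e, show ({b,b,c}:Finset α) = {b,c} from by ext x; simp; try tauto] at h
    have := Finset.card_le_two (a := b) (b := c); omega
  · rw [e, show ({c,b,c}:Finset α) = {c,b} from by ext x; simp; try tauto] at h
    have := Finset.card_le_two (a := c) (b := b); omega
  · rw [e, show ({a,c,c}:Finset α) = {a,c} from by ext x; simp; try tauto] at h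
    have := Finset.card_le_two (a := a) (b := c); omega
end helpers

lemma mem_link {n : ℕ} {E : Finset (Finset (Fin n))} {u v w : Fin n} :
    w ∈ link E u v ↔ ({u, v, w} : Finset (Fin n)) ∈ E := by simp [link]

lemma lc {n : ℕ} {E : Finset (Finset (Fin n))} {u v w : Fin n} (h : w ∈ link E u v) :
    w ∈ link E v u := by
  rw [mem_link] at h ⊢
  rwa [show ({v,u,w}:Finset (Fin n)) = {u,v,w} from by ext x; simp; try tauto]

lemma key {n : ℕ} {E : Finset (Finset (Fin n))} (hE : isEdgeSet E) (hfree : ¬ hasC5 E)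
    {b c d e v : Fin n}
    (hbc : b ≠ c) (hbd : b ≠ d) (hbe : b ≠ e) (hcd : c ≠ d) (hce : c ≠ e) (hde : d ≠ e)
    (h1 : ({b,c,d} : Finset (Fin n)) ∈ E) (h2 : ({c,d,e} : Finset (Fin n)) ∈ E)
    (m1 : v ∈ link E b c) (m2 : v ∈ link E d e) (m3 : v ∈ link E e b) : False := by
  rw [mem_link] at m1 m2 m3
  obtain ⟨-, hbv, hcv⟩ := card3_distinct (hE _ m1)
  obtain ⟨-, hdv, hev⟩ := card3_distinct (hE _ m2)
  refine hfree ⟨v, b, c, d, e, Ne.symm hbv, Ne.symm hcv, Ne.symm hdv, Ne.symm hev,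
    hbc, hbd, hbe, hcd, hce, hde, ?_, h1, h2, m2, ?_⟩
  · rw [show ({v,b,c}:Finset (Fin n)) = {b,c,v} from by ext x; simp; try tauto]; exact m1
  · rw [show ({e,v,b}:Finset (Fin n)) = {e,b,v} from by ext x; simp; try tauto]; exact m3

lemma pervertex {n : ℕ} {E : Finset (Finset (Fin n))} (hE : isEdgeSet E) (hfree : ¬ hasC5 E)
    {vi vj vk vl : Fin n} (hK4 : isK4 E vi vj vk vl) (v : Fin n) :
    ((if v ∈ link E vi vj then 1 else 0) + (if v ∈ link E vi vk then 1 else 0) +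
     (if v ∈ link E vi vl then 1 else 0) + (if v ∈ link E vj vk then 1 else 0) +
     (if v ∈ link E vj vl then 1 else 0) + (if v ∈ link E vk vl then 1 else 0) ≤ 3) ∧
    ((if v ∈ link E vi vj then 1 else 0) + (if v ∈ link E vi vk then 1 else 0) +
     (if v ∈ link E vi vl then 1 else 0) + (if v ∈ link E vj vk then 1 else 0) +
     (if v ∈ link E vj vl then 1 else 0) + (if v ∈ link E vk vl then 1 else 0) = 3 →
      (if v ∈ Aset E vj vk vl then 1 else 0) + (if v ∈ Aset E vi vk vl then 1 else 0) +
      (if v ∈ Aset E vi vj vl then 1 else 0) + (if v ∈ Aset E vi vj vk then 1 else 0) +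
      (if v ∈ Bset E vi vj vk vl then 1 else 0) + (if v ∈ Bset E vj vi vk vl then 1 else 0) +
      (if v ∈ Bset E vk vi vj vl then 1 else 0) + (if v ∈ Bset E vl vi vj vk then 1 else 0)
      = 1) := by
  obtain ⟨d12, d13, d14, d23, d24, d34, e123, e124, e134, e234⟩ := hK4
  obtain ⟨p132, p213, p231, p312, p321⟩ := tri_perm e123
  obtain ⟨q132, q213, q231, q312, q321⟩ := tri_perm e124
  obtain ⟨r132, r213, r231, r312, r321⟩ := tri_perm e134
  obtain ⟨s132, s213, s231, s312, s321⟩ := tri_perm e234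
  have lcm : ∀ x y : Fin n, link E x y = link E y x := fun x y => by
    ext w
    rw [mem_link, mem_link,
      show ({y,x,w}:Finset (Fin n)) = {x,y,w} from by ext z; simp; try tauto]
  by_cases h12 : v ∈ link E vi vj <;>
  by_cases h13 : v ∈ link E vi vk <;>
  by_cases h14 : v ∈ link E vi vl <;>
  by_cases h23 : v ∈ link E vj vk <;>
  by_cases h24 : v ∈ link E vj vl <;>
  by_cases h34 : v ∈ link E vk vl <;>
  first
  | exact (key hE hfree d13 d14 d12 d34 d23.symm d24.symm e134 s231 h13 (lc h24) (lc h12)).elim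
  | exact (key hE hfree d12 d14 d13 d24 d23 d34.symm e124 s132 h12 (lc h34) (lc h13)).elim
  | exact (key hE hfree d14 d13 d12 d34.symm d24.symm d23.symm r132 s321 h14 (lc h23) (lc h12)).elim
  | exact (key hE hfree d12 d13 d14 d23 d24 d34 e123 e234 h12 h34 (lc h14)).elim
  | exact (key hE hfree d12.symm d24 d23 d14 d13 d34.symm q213 r132 (lc h12) (lc h34) (lc h23)).elim
  | exact (key hE hfree d12.symm d23 d24 d13 d14 d34 p213 e134 (lc h12) h34 (lc h24)).elim
  | exact (key hE hfree d14 d12 d13 d24.symm d34.symm d23 q132 s312 h14 h23 (lc h13)).elim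
  | exact (key hE hfree d13 d12 d14 d23.symm d34 d24 p132 s213 h13 h24 (lc h14)).elim
  | exact (key hE hfree d13.symm d34 d23.symm d14 d12 d24.symm r213 q132 (lc h13) (lc h24) h23).elim
  | exact (key hE hfree d13.symm d23.symm d34 d12 d14 d24 p312 e124 (lc h13) h24 (lc h34)).elim
  | exact (key hE hfree d14.symm d34.symm d24.symm d13 d12 d23.symm r312 p132 (lc h14) (lc h23) h24).elim
  | exact (key hE hfree d14.symm d24.symm d34.symm d12 d13 d23 q312 e123 (lc h14) h23 h34).elim
  | (refine ⟨by simp [h12, h13, h14, h23, h24, h34], fun hf => ?_⟩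
     first
     | (simp [Aset, Bset, Finset.mem_inter, lcm vl vj, lcm vl vi, lcm vk vi, lcm vj vi,
          lcm vl vk, lcm vk vj, h12, h13, h14, h23, h24, h34]; done)
     | (exfalso; revert hf; simp [h12, h13, h14, h23, h24, h34]; done))

/-- the eight sets `A_i, A_j, A_k, A_l, B_i, B_j, B_k, B_l` partition the
vertex set (every vertex lies in exactly one of them, counted with multiplicity), and
`vi ∈ A_i` (so `A_i ≠ ∅`). -/
theorem stmt_8 (n : ℕ) (E : Finset (Finset (Fin n))) (hE : isEdgeSet E)
    (hC5free : ¬ hasC5 E)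
    (hdeg : ∀ u v : Fin n, (link E u v).Nonempty → n ≤ 2 * (link E u v).card)
    (vi vj vk vl : Fin n) (hK4 : isK4 E vi vj vk vl) :
    vi ∈ Aset E vj vk vl ∧
    ∀ v : Fin n,
      (if v ∈ Aset E vj vk vl then 1 else 0) + (if v ∈ Aset E vi vk vl then 1 else 0) +
      (if v ∈ Aset E vi vj vl then 1 else 0) + (if v ∈ Aset E vi vj vk then 1 else 0) +
      (if v ∈ Bset E vi vj vk vl then 1 else 0) + (if v ∈ Bset E vj vi vk vl then 1 else 0) +
      (if v ∈ Bset E vk vi vj vl then 1 else 0) + (if v ∈ Bset E vl vi vj vk then 1 else 0)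
      = 1 := by
  obtain ⟨d12, d13, d14, d23, d24, d34, e123, e124, e134, e234⟩ := id hK4
  obtain ⟨p132, p213, p231, p312, p321⟩ := tri_perm e123
  obtain ⟨q132, q213, q231, q312, q321⟩ := tri_perm e124
  obtain ⟨r132, r213, r231, r312, r321⟩ := tri_perm e134
  obtain ⟨s132, s213, s231, s312, s321⟩ := tri_perm e234
  constructor
  · simp only [Aset, Finset.mem_inter, mem_link]
    exact ⟨⟨p231, r231⟩, q321⟩
  · intro v
    have hub : ∀ w : Fin n,
        (if w ∈ link E vi vj then 1 else 0) + (if w ∈ link E vi vk then 1 else 0) +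
        (if w ∈ link E vi vl then 1 else 0) + (if w ∈ link E vj vk then 1 else 0) +
        (if w ∈ link E vj vl then 1 else 0) + (if w ∈ link E vk vl then 1 else 0) ≤ 3 :=
      fun w => (pervertex hE hC5free hK4 w).1
    have hsum : (∑ w : Fin n,
        ((if w ∈ link E vi vj then 1 else 0) + (if w ∈ link E vi vk then 1 else 0) +
         (if w ∈ link E vi vl then 1 else 0) + (if w ∈ link E vj vk then 1 else 0) +
         (if w ∈ link E vj vl then 1 else 0) + (if w ∈ link E vk vl then 1 else 0))) =
        (link E vi vj).card + (link E vi vk).card + (link E vi vl).card +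
        (link E vj vk).card + (link E vj vl).card + (link E vk vl).card := by
      simp [Finset.sum_add_distrib, Finset.sum_ite_mem, Finset.univ_inter]
    have hup : (∑ w : Fin n,
        ((if w ∈ link E vi vj then 1 else 0) + (if w ∈ link E vi vk then 1 else 0) +
         (if w ∈ link E vi vl then 1 else 0) + (if w ∈ link E vj vk then 1 else 0) +
         (if w ∈ link E vj vl then 1 else 0) + (if w ∈ link E vk vl then 1 else 0))) ≤ 3 * n := by
      calc _ ≤ ∑ _w : Fin n, 3 := Finset.sum_le_sum (fun i _ => hub i)
        _ = 3 * n := by simp [Finset.sum_const, Finset.card_univ, mul_comm]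
    have L1 := hdeg vi vj ⟨vk, mem_link.mpr e123⟩
    have L2 := hdeg vi vk ⟨vj, mem_link.mpr p132⟩
    have L3 := hdeg vi vl ⟨vj, mem_link.mpr q132⟩
    have L4 := hdeg vj vk ⟨vi, mem_link.mpr p231⟩
    have L5 := hdeg vj vl ⟨vi, mem_link.mpr q231⟩
    have L6 := hdeg vk vl ⟨vi, mem_link.mpr r231⟩
    have hf3 : (if v ∈ link E vi vj then 1 else 0) + (if v ∈ link E vi vk then 1 else 0) +
        (if v ∈ link E vi vl then 1 else 0) + (if v ∈ link E vj vk then 1 else 0) +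
        (if v ∈ link E vj vl then 1 else 0) + (if v ∈ link E vk vl then 1 else 0) = 3 := by
      by_contra hne
      have hlt : (if v ∈ link E vi vj then 1 else 0) + (if v ∈ link E vi vk then 1 else 0) +
          (if v ∈ link E vi vl then 1 else 0) + (if v ∈ link E vj vk then 1 else 0) +
          (if v ∈ link E vj vl then 1 else 0) + (if v ∈ link E vk vl then 1 else 0) < 3 :=
        lt_of_le_of_ne (hub v) hne
      have hstrict : (∑ w : Fin n,
          ((if w ∈ link E vi vj then 1 else 0) + (if w ∈ link E vi vk then 1 else 0) +
           (if w ∈ link E vi vl then 1 else 0) + (if w ∈ link E vj vk then 1 else 0) +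
           (if w ∈ link E vj vl then 1 else 0) + (if w ∈ link E vk vl then 1 else 0))) <
          ∑ _w : Fin n, 3 :=
        Finset.sum_lt_sum (fun i _ => hub i) ⟨v, Finset.mem_univ v, hlt⟩
      have h3n : (∑ _w : Fin n, 3) = 3 * n := by
        simp [Finset.sum_const, Finset.card_univ, mul_comm]
      omega
    exact (pervertex hE hC5free hK4 v).2 hf3
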